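/- arXiv:2307.12982 — 3 statements merged into one kernel-verified Lean document; each statement's English description precedes it below -/
import Mathlib

section
/- Fix k < j ≤ q. For any real γ, the scaled score difference (1/N)(GAIC^γ_j(N) − GAIC^γ_k(N)) converges as N → ∞ to (γ − 2)(j − k). In particular, for γ = 2 the scaled difference between the AIC scores of any two models of index at least k converges to 0. -/
/-!
Passing from model `k` to a model `j > k` removes the terms `ℓ_{k+1}², …, ℓ_j²` from the
data-fit sum and adds `γ(N(j − k) − const)` to the penalty. After division by `N`, the
removed terms contribute `−(1/(2σ²)) Σ_{i=k+1}^{j} ℓ_i(N)² → −(j − k)(2σ)²/(2σ²) = −2(j − k)`,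
since only bulk eigenvalues are involved, while the penalty contributes `γ(j − k) + O(1/N)`.
Differences between two models of index at least `k` follow by subtracting two such limits.
-/

open Filter

/-- For `σ > 0`, `ψ_σ(x) = x + σ²/x`. -/
noncomputable def psi (σ x : ℝ) : ℝ := x + σ ^ 2 / x

/-- The score `GAIC^γ_j(N) = (N/(2σ²)) Σ_{i=j+1}^{q} ℓ_i(N)² + γ(Nj − j(j−1)/2)`. -/
noncomputable def GAIC (σ : ℝ) (q : ℕ) (ℓ : ℕ → ℕ → ℝ) (γ : ℝ) (j N : ℕ) : ℝ :=
  ((N : ℝ) / (2 * σ ^ 2)) * ∑ i ∈ Finset.Icc (j + 1) q, (ℓ i N) ^ 2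
    + γ * ((N : ℝ) * (j : ℝ) - (j : ℝ) * ((j : ℝ) - 1) / 2)

open Finset in
theorem Filter.Tendsto.finset_sum_const {ι α M : Type*} [AddCommMonoid M] [TopologicalSpace M]
    [ContinuousAdd M] {l : Filter α} {f : ι → α → M} {s : Finset ι} {c : M}
    (h : ∀ i ∈ s, Tendsto (f i) l (nhds c)) :
    Tendsto (fun x => ∑ i ∈ s, f i x) l (nhds (#s • c)) := by
  simpa using tendsto_finsetSum s h

theorem GAIC_sub_GAIC (σ : ℝ) (q : ℕ) (ℓ : ℕ → ℕ → ℝ) (γ : ℝ) {a b : ℕ} (hba : b ≤ a)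
    (haq : a ≤ q) (N : ℕ) :
    GAIC σ q ℓ γ a N - GAIC σ q ℓ γ b N =
      -((N : ℝ) / (2 * σ ^ 2)) * ∑ i ∈ Finset.Ioc b a, ℓ i N ^ 2
        + γ * ((N : ℝ) * ((a : ℝ) - b) - ((a : ℝ) * (a - 1) - (b : ℝ) * (b - 1)) / 2) := by
  have hsplit : ∑ i ∈ Finset.Ioc b q, ℓ i N ^ 2
      = ∑ i ∈ Finset.Ioc b a, ℓ i N ^ 2 + ∑ i ∈ Finset.Ioc a q, ℓ i N ^ 2 :=
    (Finset.sum_Ioc_consecutive _ hba haq).symm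
  simp only [GAIC, Finset.Icc_add_one_left_eq_Ioc, hsplit]
  ring

section Bulk

variable {σ : ℝ} {q k : ℕ} {ℓ : ℕ → ℕ → ℝ}

theorem tendsto_GAIC_sub_GAIC_div_of_le (hσ : σ ≠ 0)
    (hbulk : ∀ i : ℕ, k < i → i ≤ q → Tendsto (fun N : ℕ => ℓ i N) atTop (nhds (2 * σ)))
    (γ : ℝ) {a : ℕ} (hka : k ≤ a) (haq : a ≤ q) :
    Tendsto (fun N : ℕ => (1 / (N : ℝ)) * (GAIC σ q ℓ γ a N - GAIC σ q ℓ γ k N)) atTop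
      (nhds ((γ - 2) * ((a : ℝ) - k))) := by
  set c : ℝ := ((a : ℝ) * (a - 1) - (k : ℝ) * (k - 1)) / 2
  have hsum : Tendsto (fun N : ℕ => ∑ i ∈ Finset.Ioc k a, ℓ i N ^ 2) atTop
      (nhds (((a : ℝ) - k) * (2 * σ) ^ 2)) := by
    have h := Tendsto.finset_sum_const (s := Finset.Ioc k a) (c := (2 * σ) ^ 2)
      fun i hi => ((hbulk i (Finset.mem_Ioc.1 hi).1 ((Finset.mem_Ioc.1 hi).2.trans haq)).pow 2)
    rwa [Nat.card_Ioc, nsmul_eq_mul, Nat.cast_sub hka] at h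
  have hlim : Tendsto (fun N : ℕ =>
      -(1 / (2 * σ ^ 2)) * ∑ i ∈ Finset.Ioc k a, ℓ i N ^ 2 + γ * ((a : ℝ) - k)
        - γ * c * (1 / (N : ℝ))) atTop (nhds ((γ - 2) * ((a : ℝ) - k))) := by
    have h := ((hsum.const_mul (-(1 / (2 * σ ^ 2)))).add_const (γ * ((a : ℝ) - k))).sub
      (tendsto_one_div_atTop_nhds_zero_nat.const_mul (γ * c))
    convert h using 2
    field_simp
    ring
  refine hlim.congr' ?_
  filter_upwards [eventually_ne_atTop 0] with N hN
  rw [GAIC_sub_GAIC σ q ℓ γ hka haq]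
  field_simp
  ring

theorem tendsto_GAIC_sub_GAIC_div (hσ : σ ≠ 0)
    (hbulk : ∀ i : ℕ, k < i → i ≤ q → Tendsto (fun N : ℕ => ℓ i N) atTop (nhds (2 * σ)))
    (γ : ℝ) {a b : ℕ} (hka : k ≤ a) (haq : a ≤ q) (hkb : k ≤ b) (hbq : b ≤ q) :
    Tendsto (fun N : ℕ => (1 / (N : ℝ)) * (GAIC σ q ℓ γ a N - GAIC σ q ℓ γ b N)) atTop
      (nhds ((γ - 2) * ((a : ℝ) - b))) := by
  have h := (tendsto_GAIC_sub_GAIC_div_of_le hσ hbulk γ hka haq).sub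
    (tendsto_GAIC_sub_GAIC_div_of_le hσ hbulk γ hkb hbq)
  convert h using 2 <;> ring

end Bulk

theorem gaic_diff_tendsto_above_general
    (σ : ℝ) (hσ : 0 < σ) (q k : ℕ)
    (ℓ : ℕ → ℕ → ℝ)
    (hbulk : ∀ i : ℕ, k < i → i ≤ q →
      Tendsto (fun N : ℕ => ℓ i N) atTop (nhds (2 * σ)))
    (j : ℕ) (hkj : k < j) (hjq : j ≤ q) (γ : ℝ) :
    Tendsto (fun N : ℕ => (1 / (N : ℝ)) * (GAIC σ q ℓ γ j N - GAIC σ q ℓ γ k N)) atTop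
      (nhds ((γ - 2) * ((j : ℝ) - (k : ℝ)))) ∧
    ∀ j₁ j₂ : ℕ, k ≤ j₁ → j₁ ≤ q → k ≤ j₂ → j₂ ≤ q →
      Tendsto (fun N : ℕ => (1 / (N : ℝ)) * (GAIC σ q ℓ 2 j₁ N - GAIC σ q ℓ 2 j₂ N)) atTop
        (nhds 0) :=
  ⟨tendsto_GAIC_sub_GAIC_div_of_le hσ.ne' hbulk γ hkj.le hjq, fun _ _ hk₁ h₁q hk₂ h₂q => by
    simpa using tendsto_GAIC_sub_GAIC_div hσ.ne' hbulk 2 hk₁ h₁q hk₂ h₂q⟩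

/-- For fixed `k < j ≤ q` and any real `γ`, the scaled score difference
`(1/N)(GAIC^γ_j(N) − GAIC^γ_k(N))` converges to `(γ − 2)(j − k)`. In particular, for
`γ = 2` the scaled difference between the AIC scores of any two models of index at least
`k` converges to `0`. -/
theorem gaic_diff_tendsto_above
    (σ : ℝ) (hσ : 0 < σ) (q k : ℕ) (hq : 1 ≤ q) (hkq : k ≤ q)
    (lam : ℕ → ℝ)
    (hlam_anti : ∀ i j : ℕ, 1 ≤ i → i ≤ j → j ≤ k → lam j ≤ lam i)
    (hlam_gt : ∀ i : ℕ, 1 ≤ i → i ≤ k → σ < lam i)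
    (ℓ : ℕ → ℕ → ℝ)
    (hℓ_anti : ∀ N i j : ℕ, 1 ≤ i → i ≤ j → j ≤ q → ℓ j N ≤ ℓ i N)
    (hspike : ∀ i : ℕ, 1 ≤ i → i ≤ k →
      Tendsto (fun N : ℕ => ℓ i N) atTop (nhds (psi σ (lam i))))
    (hbulk : ∀ i : ℕ, k < i → i ≤ q →
      Tendsto (fun N : ℕ => ℓ i N) atTop (nhds (2 * σ)))
    (j : ℕ) (hkj : k < j) (hjq : j ≤ q) (γ : ℝ) :
    Tendsto (fun N : ℕ => (1 / (N : ℝ)) * (GAIC σ q ℓ γ j N - GAIC σ q ℓ γ k N)) atTop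
      (nhds ((γ - 2) * ((j : ℝ) - (k : ℝ)))) ∧
    ∀ j₁ j₂ : ℕ, k ≤ j₁ → j₁ ≤ q → k ≤ j₂ → j₂ ≤ q →
      Tendsto (fun N : ℕ => (1 / (N : ℝ)) * (GAIC σ q ℓ 2 j₁ N - GAIC σ q ℓ 2 j₂ N)) atTop
        (nhds 0) :=
  gaic_diff_tendsto_above_general σ hσ q k ℓ hbulk j hkj hjq γ
end

section
/- (Deterministic form of Theorem 2.3: strong consistency of soft AIC.) Assume k ≥ 1 and let ξ_k := (ψ_σ(λ_k)² − 4σ²)/(2σ²). Let ξ̂(N) be a sequence of reals such that liminf_{N→∞} ξ̂(N) > 0 and limsup_{N→∞} ξ̂(N) ≤ ξ_k. Define AIC_j(N) = GAIC^2_j(N) and the soft minimizer k̂_soft(N) := min{ j ∈ {0,…,q} : (1/N)·(AIC_j(N) − min_{0 ≤ j' ≤ q} AIC_{j'}(N)) < ξ̂(N)/3 }. Then there exists N₀ such that k̂_soft(N) = k for all N ≥ N₀. -/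
/-!
After division by `N`, `AIC_j(N)` converges to `2q + ∑_{i > j} e_i`, where
`e_i = (ℓ_i(∞)² - 4σ²)/(2σ²)` vanishes in the bulk and is positive for the `k` spikes, since
`ψ_σ(λ) > 2σ` for `λ > σ`. So the normalized gap `(AIC_j - min AIC)/N` tends to `0` at `j = k`
and to at least `e_k = ξ_k` for `j < k`, while the threshold `ξ̂/3` is eventually trapped
in `[c/3, 2ξ_k/3]`: only `k` and larger indices pass the test, and `k` does.
-/

open Filter

open Finset Topology

lemma two_mul_lt_psi {σ x : ℝ} (hσ : 0 < σ) (hx : σ < x) : 2 * σ < psi σ x := by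
  have hx0 : 0 < x := hσ.trans hx
  rw [psi, ← sub_lt_iff_lt_add', lt_div_iff₀ hx0]
  nlinarith [sq_nonneg (x - σ)]

lemma tendsto_div_sub_inf' {ι : Type*} {I : Finset ι} (hne : I.Nonempty) {s : ι → ℕ → ℝ}
    {A : ι → ℝ} (hs : ∀ i ∈ I, Tendsto (fun N => s i N / N) atTop (𝓝 (A i))) {j : ι}
    (hj : j ∈ I) :
    Tendsto (fun N : ℕ => (1 / (N : ℝ)) * (s j N - I.inf' hne (s · N))) atTop
      (𝓝 (A j - I.inf' hne A)) := by
  refine ((hs j hj).sub (Tendsto.finset_inf'_nhds_apply hne hs)).congr fun N => ?_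
  have hmono : Monotone fun x : ℝ => x / N := fun x y hxy =>
    div_le_div_of_nonneg_right hxy N.cast_nonneg
  have hcomm : I.inf' hne (s · N / N) = I.inf' hne (s · N) / N :=
    (apply_inf'_eq_inf'_comp hne (· / (N : ℝ)) fun _ _ => hmono.map_min).symm
  rw [hcomm]
  ring

theorem eventually_sInf_soft_argmin_eq {s : ℕ → ℕ → ℝ} {A : ℕ → ℝ} {q k : ℕ} {t : ℕ → ℝ}
    {c ξ : ℝ} (hkq : k ≤ q)
    (hne : (range (q + 1)).Nonempty)
    (hs : ∀ j ≤ q, Tendsto (fun N => s j N / N) atTop (𝓝 (A j)))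
    (hmin : ∀ j ≤ q, A k ≤ A j) (hgap : ∀ j < k, A k + ξ < A j)
    (hc : 0 < c) (hlow : ∀ᶠ N in atTop, c ≤ t N) (hup : ∀ᶠ N in atTop, t N ≤ ξ) :
    ∀ᶠ N : ℕ in atTop, sInf {j : ℕ | j ≤ q ∧
      (1 / (N : ℝ)) * (s j N - (range (q + 1)).inf' hne (s · N)) < t N} = k := by
  have hinf : (range (q + 1)).inf' hne A = A k :=
    le_antisymm (inf'_le A (mem_range_succ_iff.mpr hkq))
      (le_inf' hne A fun j hj => hmin j (mem_range_succ_iff.mp hj))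
  have hgap_tendsto : ∀ j ≤ q, Tendsto
      (fun N : ℕ => (1 / (N : ℝ)) * (s j N - (range (q + 1)).inf' hne (s · N))) atTop
      (𝓝 (A j - A k)) := fun j hj =>
    hinf ▸ tendsto_div_sub_inf' hne (fun i hi => hs i (mem_range_succ_iff.mp hi))
      (mem_range_succ_iff.mpr hj)
  have hk_in : ∀ᶠ N : ℕ in atTop,
      (1 / (N : ℝ)) * (s k N - (range (q + 1)).inf' hne (s · N)) < c :=
    (hgap_tendsto k hkq).eventually (gt_mem_nhds (by simpa using hc))
  have hbelow_out : ∀ᶠ N : ℕ in atTop, ∀ j ∈ range k,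
      ξ < (1 / (N : ℝ)) * (s j N - (range (q + 1)).inf' hne (s · N)) := by
    refine (eventually_all_finset _).mpr fun j hj => ?_
    have hjk := mem_range.mp hj
    exact (hgap_tendsto j (hjk.le.trans hkq)).eventually
      (lt_mem_nhds (by linarith [hgap j hjk]))
  filter_upwards [hk_in, hbelow_out, hlow, hup] with N hkN hjN hlowN hupN
  have hk_mem : k ∈ {j : ℕ | j ≤ q ∧
      (1 / (N : ℝ)) * (s j N - (range (q + 1)).inf' hne (s · N)) < t N} :=
    ⟨hkq, hkN.trans_le hlowN⟩
  refine le_antisymm (Nat.sInf_le hk_mem) (le_csInf ⟨k, hk_mem⟩ fun j ⟨_, hjt⟩ => ?_)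
  by_contra! hjk
  linarith [hjN j (mem_range.mpr hjk)]

lemma tendsto_GAIC_div {σ γ : ℝ} {q j : ℕ} {ℓ : ℕ → ℕ → ℝ} {m : ℕ → ℝ}
    (hℓ : ∀ i ∈ Icc (j + 1) q, Tendsto (fun N => ℓ i N) atTop (𝓝 (m i))) :
    Tendsto (fun N : ℕ => GAIC σ q ℓ γ j N / N) atTop
      (𝓝 ((1 / (2 * σ ^ 2)) * ∑ i ∈ Icc (j + 1) q, m i ^ 2 + γ * j)) := by
  have hlim := (((tendsto_finsetSum _ fun i hi => (hℓ i hi).pow 2).const_mul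
    (1 / (2 * σ ^ 2))).add_const (γ * j)).sub
    (tendsto_one_div_atTop_nhds_zero_nat.const_mul (γ * (j * (j - 1) / 2)))
  rw [mul_zero, sub_zero] at hlim
  refine hlim.congr' ?_
  filter_upwards [eventually_ne_atTop 0] with N hN
  have hN0 : (N : ℝ) ≠ 0 := Nat.cast_ne_zero.mpr hN
  rw [GAIC]
  field_simp
  ring

lemma sum_sq_div_add_two_mul_eq {σ : ℝ} (hσ : σ ≠ 0) {q j : ℕ} (hjq : j ≤ q) (m : ℕ → ℝ) :
    (1 / (2 * σ ^ 2)) * ∑ i ∈ Icc (j + 1) q, m i ^ 2 + 2 * j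
      = 2 * q + ∑ i ∈ Icc (j + 1) q, (m i ^ 2 - 4 * σ ^ 2) / (2 * σ ^ 2) := by
  rw [← sum_div, sum_sub_distrib, sum_const, Nat.card_Icc, nsmul_eq_mul,
    Nat.cast_sub (by omega)]
  push_cast
  field_simp
  ring

noncomputable def spikeLimit (σ : ℝ) (lam : ℕ → ℝ) (k i : ℕ) : ℝ :=
  if i ≤ k then psi σ (lam i) else 2 * σ

lemma tendsto_spikeLimit {σ : ℝ} {lam : ℕ → ℝ} {ℓ : ℕ → ℕ → ℝ} {k q : ℕ}
    (hspike : ∀ i, 1 ≤ i → i ≤ k → Tendsto (fun N => ℓ i N) atTop (𝓝 (psi σ (lam i))))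
    (hbulk : ∀ i, k < i → i ≤ q → Tendsto (fun N => ℓ i N) atTop (𝓝 (2 * σ)))
    {i : ℕ} (h1i : 1 ≤ i) (hiq : i ≤ q) :
    Tendsto (fun N => ℓ i N) atTop (𝓝 (spikeLimit σ lam k i)) := by
  unfold spikeLimit
  split_ifs with hik
  · exact hspike i h1i hik
  · exact hbulk i (not_le.mp hik) hiq

noncomputable def aicExcess (σ : ℝ) (lam : ℕ → ℝ) (k i : ℕ) : ℝ :=
  (spikeLimit σ lam k i ^ 2 - 4 * σ ^ 2) / (2 * σ ^ 2)

section Excess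

variable {σ : ℝ} {lam : ℕ → ℝ} {k : ℕ}

lemma aicExcess_of_lt {i : ℕ} (hki : k < i) : aicExcess σ lam k i = 0 := by
  rw [aicExcess, spikeLimit, if_neg hki.not_ge]
  ring

lemma aicExcess_pos (hσ : 0 < σ) {i : ℕ} (hik : i ≤ k) (hlam : σ < lam i) :
    0 < aicExcess σ lam k i := by
  have hψ := two_mul_lt_psi hσ hlam
  rw [aicExcess, spikeLimit, if_pos hik]
  apply div_pos _ (by positivity)
  nlinarith

lemma aicExcess_nonneg (hσ : 0 < σ) (hlam_gt : ∀ i, 1 ≤ i → i ≤ k → σ < lam i) {i : ℕ}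
    (hi : 1 ≤ i) : 0 ≤ aicExcess σ lam k i := by
  rcases le_or_gt i k with hik | hki
  · exact (aicExcess_pos hσ hik (hlam_gt i hi hik)).le
  · exact (aicExcess_of_lt hki).ge

lemma sum_aicExcess_Icc_succ_self (q : ℕ) : ∑ i ∈ Icc (k + 1) q, aicExcess σ lam k i = 0 :=
  sum_eq_zero fun _ hi => aicExcess_of_lt (mem_Icc.mp hi).1

lemma sum_aicExcess_nonneg (hσ : 0 < σ) (hlam_gt : ∀ i, 1 ≤ i → i ≤ k → σ < lam i)
    (j q : ℕ) : 0 ≤ ∑ i ∈ Icc (j + 1) q, aicExcess σ lam k i :=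
  sum_nonneg fun _ hi => aicExcess_nonneg hσ hlam_gt (by have := (mem_Icc.mp hi).1; omega)

lemma aicExcess_self_le_sum (hσ : 0 < σ) (hlam_gt : ∀ i, 1 ≤ i → i ≤ k → σ < lam i)
    {j q : ℕ} (hjk : j < k) (hkq : k ≤ q) :
    aicExcess σ lam k k ≤ ∑ i ∈ Icc (j + 1) q, aicExcess σ lam k i :=
  single_le_sum (f := aicExcess σ lam k)
    (fun _ hi => aicExcess_nonneg hσ hlam_gt (by have := (mem_Icc.mp hi).1; omega))
    (mem_Icc.mpr ⟨hjk, hkq⟩)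

end Excess

theorem soft_aic_strong_consistency_general
    (σ : ℝ) (hσ : 0 < σ) (q k : ℕ) (hkq : k ≤ q)
    (lam : ℕ → ℝ)
    (hlam_gt : ∀ i : ℕ, 1 ≤ i → i ≤ k → σ < lam i)
    (ℓ : ℕ → ℕ → ℝ)
    (hspike : ∀ i : ℕ, 1 ≤ i → i ≤ k →
      Tendsto (fun N : ℕ => ℓ i N) atTop (nhds (psi σ (lam i))))
    (hbulk : ∀ i : ℕ, k < i → i ≤ q →
      Tendsto (fun N : ℕ => ℓ i N) atTop (nhds (2 * σ)))
    (hk : 1 ≤ k) (xihat : ℕ → ℝ)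
    (hliminf : ∃ c : ℝ, 0 < c ∧ ∀ᶠ N in atTop, c ≤ xihat N)
    (hlimsup : ∀ ε : ℝ, 0 < ε → ∀ᶠ N in atTop,
      xihat N ≤ ((psi σ (lam k)) ^ 2 - 4 * σ ^ 2) / (2 * σ ^ 2) + ε) :
    ∃ N₀ : ℕ, ∀ N ≥ N₀,
      sInf {j : ℕ | j ≤ q ∧
        (1 / (N : ℝ)) * (GAIC σ q ℓ 2 j N -
          (Finset.range (q + 1)).inf' (Finset.nonempty_range_iff.mpr (Nat.succ_ne_zero q))
            (fun j' => GAIC σ q ℓ 2 j' N)) < xihat N / 3} = k := by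
  obtain ⟨c, hc, hlow⟩ := hliminf
  set ξ := aicExcess σ lam k k
  have hξ : 0 < ξ := aicExcess_pos hσ le_rfl (hlam_gt k hk le_rfl)
  have hξ_eq : ξ = ((psi σ (lam k)) ^ 2 - 4 * σ ^ 2) / (2 * σ ^ 2) := by
    simp only [ξ, aicExcess, spikeLimit, if_pos le_rfl]
  have hAIC : ∀ j ≤ q, Tendsto (fun N => GAIC σ q ℓ 2 j N / N) atTop
      (𝓝 (2 * q + ∑ i ∈ Icc (j + 1) q, aicExcess σ lam k i)) := fun j hjq => by
    simp only [aicExcess]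
    rw [← sum_sq_div_add_two_mul_eq hσ.ne' hjq]
    exact tendsto_GAIC_div fun i hi => tendsto_spikeLimit hspike hbulk
      (by have := (mem_Icc.mp hi).1; omega) (mem_Icc.mp hi).2
  refine eventually_atTop.mp (eventually_sInf_soft_argmin_eq (c := c / 3) (ξ := 2 * ξ / 3)
    hkq _ hAIC (fun j _ => ?_) (fun j hjk => ?_) (by positivity) ?_ ?_)
  · rw [sum_aicExcess_Icc_succ_self]
    linarith [sum_aicExcess_nonneg hσ hlam_gt j q]
  · rw [sum_aicExcess_Icc_succ_self]
    linarith [aicExcess_self_le_sum hσ hlam_gt hjk hkq]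
  · filter_upwards [hlow] with N hN
    linarith
  · filter_upwards [hlimsup ξ hξ] with N hN
    linarith

/-- Deterministic form of Theorem 2.3: strong consistency of soft AIC. With
`ξ_k = (ψ_σ(λ_k)² − 4σ²)/(2σ²)` and a threshold sequence `ξ̂(N)` satisfying
`liminf ξ̂(N) > 0` (there is an eventual positive lower bound) and
`limsup ξ̂(N) ≤ ξ_k` (eventually `ξ̂(N) ≤ ξ_k + ε` for every `ε > 0`), the soft
minimizer `k̂_soft(N) = min{ j ≤ q : (1/N)(AIC_j(N) − min_{j' ≤ q} AIC_{j'}(N)) < ξ̂(N)/3 }`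
(where `AIC_j = GAIC^2_j`) equals `k` for all large `N`. -/
theorem soft_aic_strong_consistency
    (σ : ℝ) (hσ : 0 < σ) (q k : ℕ) (hq : 1 ≤ q) (hkq : k ≤ q)
    (lam : ℕ → ℝ)
    (hlam_anti : ∀ i j : ℕ, 1 ≤ i → i ≤ j → j ≤ k → lam j ≤ lam i)
    (hlam_gt : ∀ i : ℕ, 1 ≤ i → i ≤ k → σ < lam i)
    (ℓ : ℕ → ℕ → ℝ)
    (hℓ_anti : ∀ N i j : ℕ, 1 ≤ i → i ≤ j → j ≤ q → ℓ j N ≤ ℓ i N)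
    (hspike : ∀ i : ℕ, 1 ≤ i → i ≤ k →
      Tendsto (fun N : ℕ => ℓ i N) atTop (nhds (psi σ (lam i))))
    (hbulk : ∀ i : ℕ, k < i → i ≤ q →
      Tendsto (fun N : ℕ => ℓ i N) atTop (nhds (2 * σ)))
    (hk : 1 ≤ k) (xihat : ℕ → ℝ)
    (hliminf : ∃ c : ℝ, 0 < c ∧ ∀ᶠ N in atTop, c ≤ xihat N)
    (hlimsup : ∀ ε : ℝ, 0 < ε → ∀ᶠ N in atTop,
      xihat N ≤ ((psi σ (lam k)) ^ 2 - 4 * σ ^ 2) / (2 * σ ^ 2) + ε) :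
    ∃ N₀ : ℕ, ∀ N ≥ N₀,
      sInf {j : ℕ | j ≤ q ∧
        (1 / (N : ℝ)) * (GAIC σ q ℓ 2 j N -
          (Finset.range (q + 1)).inf' (Finset.nonempty_range_iff.mpr (Nat.succ_ne_zero q))
            (fun j' => GAIC σ q ℓ 2 j' N)) < xihat N / 3} = k :=
  soft_aic_strong_consistency_general σ hσ q k hkq lam hlam_gt ℓ hspike hbulk hk xihat hliminf
    hlimsup
end

section
/- (Joint maximum likelihood estimation for the spiked GOE model with unknown σ².) Let n ≥ 1 and let X be a real symmetric n×n matrix with spectral decomposition X = Σ_{i=1}^{n} ℓ_i v_i v_iᵀ, where ℓ_1 ≥ ⋯ ≥ ℓ_n are the eigenvalues and v_1, …, v_n are orthonormal eigenvectors. Fix 0 ≤ j ≤ n, define Â_j = Σ_{i=1}^{j} max(ℓ_i, 0) v_i v_iᵀ and σ̂²_j = ‖X − Â_j‖_F²/(n + 1), and assume σ̂²_j > 0. Define the log-likelihood functional L(A, s) = −(n(n+1)/4)·log s − (n/(4s))·‖X − A‖_F² for real symmetric n×n matrices A and s > 0. Then for every real symmetric positive semidefinite n×n matrix B with rank(B)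 ≤ j and every s > 0, one has L(B, s) ≤ L(Â_j, σ̂²_j). -/
/-!
Write `X = ∑ ℓᵢ vᵢvᵢᵀ` and diagonalize `B = ∑ μₖ wₖwₖᵀ`. Then
`‖X - B‖² = ∑ ℓᵢ² - 2 ∑ᵢₖ ℓᵢ μₖ Pᵢₖ + ∑ μₖ²` with `Pᵢₖ = (vᵢ ⬝ wₖ)²` doubly stochastic.
For each `k`, `2 μₖ qₖ - μₖ² ≤ (qₖ⁺)²` where `qₖ = ∑ᵢ Pᵢₖ ℓᵢ`, and by Jensen
`(qₖ⁺)² ≤ ∑ᵢ Pᵢₖ (ℓᵢ⁺)²`. Summing over the at most `j` indices with `μₖ ≠ 0` gives weights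
`cᵢ ∈ [0, 1]` of total mass `≤ j` on the decreasing sequence `(ℓᵢ⁺)²`, so the sum is at most
`∑_{i < j} (ℓᵢ⁺)²`, which is exactly what `Â_j` removes from `‖X‖²`: `Â_j` is a best
positive semidefinite rank-`j` fit. Finally, for a fixed residual `R`,
`s ↦ -(n(n+1)/4) log s - n R / (4 s)` is maximal at `s = R / (n + 1)`, because `log x ≤ x - 1`.
-/

open Matrix Finset

namespace Matrix

section Frobenius

variable {R ι κ κ' : Type*} [CommSemiring R] [Fintype ι]

lemma sum_sum_sq_eq_trace_mul_transpose [Fintype κ] (M : Matrix ι κ R) :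
    ∑ a, ∑ b, M a b ^ 2 = (M * Mᵀ).trace := by
  simp only [trace, diag, mul_apply, transpose_apply, sq]

lemma trace_vecMulVec_mul_vecMulVec (u w : ι → R) :
    (vecMulVec u u * vecMulVec w w).trace = (u ⬝ᵥ w) ^ 2 := by
  rw [vecMulVec_mul_vecMulVec, trace_vecMulVec, dotProduct_smul, smul_eq_mul, sq]

lemma trace_sum_vecMulVec_mul_sum_vecMulVec [Fintype κ] [Fintype κ'] (r : κ → R)
    (u : κ → ι → R) (μ : κ' → R) (w : κ' → ι → R) :
    ((∑ i, r i • vecMulVec (u i) (u i)) * ∑ k, μ k • vecMulVec (w k) (w k)).trace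
      = ∑ i, ∑ k, r i * μ k * (u i ⬝ᵥ w k) ^ 2 := by
  simp only [Finset.sum_mul, Finset.mul_sum, trace_sum, smul_mul_smul_comm, trace_smul,
    trace_vecMulVec_mul_vecMulVec, smul_eq_mul]
  exact Finset.sum_comm

end Frobenius

lemma transpose_sum_smul_vecMulVec {R ι κ : Type*} [CommSemiring R] [Fintype κ] (r : κ → R)
    (u : κ → ι → R) :
    (∑ i, r i • vecMulVec (u i) (u i))ᵀ = ∑ i, r i • vecMulVec (u i) (u i) := by
  simp only [transpose_sum, transpose_smul, transpose_vecMulVec]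

section Orthonormal

variable {R ι : Type*} [CommRing R] [Fintype ι] [DecidableEq ι] {u w : ι → ι → R}

lemma sum_sq_dotProduct_of_orthonormal (hu : ∀ i k, u i ⬝ᵥ u k = if i = k then 1 else 0)
    (x : ι → R) : ∑ i, (u i ⬝ᵥ x) ^ 2 = x ⬝ᵥ x := by
  set U := Matrix.of u
  have hUUt : U * Uᵀ = 1 := by
    ext i k
    simpa [U, mul_apply, one_apply, dotProduct] using hu i k
  calc ∑ i, (u i ⬝ᵥ x) ^ 2 = (U *ᵥ x) ⬝ᵥ (U *ᵥ x) := by simp only [sq]; rfl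
    _ = x ⬝ᵥ x := by
      rw [dotProduct_mulVec, ← vecMul_transpose, vecMul_vecMul, mul_eq_one_comm.mp hUUt,
        vecMul_one]

lemma sum_sum_mul_sq_dotProduct_of_orthonormal
    (hu : ∀ i k, u i ⬝ᵥ u k = if i = k then 1 else 0) (f : ι → ι → R) :
    ∑ i, ∑ k, f i k * (u i ⬝ᵥ u k) ^ 2 = ∑ i, f i i := by
  simp [hu]

lemma sum_sum_sq_sub_sum_smul_vecMulVec
    (hu : ∀ i k, u i ⬝ᵥ u k = if i = k then 1 else 0)
    (hw : ∀ i k, w i ⬝ᵥ w k = if i = k then 1 else 0) (r μ : ι → R) :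
    ∑ a, ∑ b, ((∑ i, r i • vecMulVec (u i) (u i)) a b
        - (∑ k, μ k • vecMulVec (w k) (w k)) a b) ^ 2
      = ∑ i, r i ^ 2 - 2 * ∑ i, ∑ k, r i * μ k * (u i ⬝ᵥ w k) ^ 2 + ∑ k, μ k ^ 2 := by
  simp only [← Matrix.sub_apply]
  rw [sum_sum_sq_eq_trace_mul_transpose, transpose_sub, transpose_sum_smul_vecMulVec,
    transpose_sum_smul_vecMulVec, sub_mul, mul_sub, mul_sub, trace_sub, trace_sub, trace_sub,
    trace_mul_comm (∑ k, μ k • vecMulVec (w k) (w k)), trace_sum_vecMulVec_mul_sum_vecMulVec,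
    trace_sum_vecMulVec_mul_sum_vecMulVec, trace_sum_vecMulVec_mul_sum_vecMulVec,
    sum_sum_mul_sq_dotProduct_of_orthonormal hu (fun i k => r i * r k),
    sum_sum_mul_sq_dotProduct_of_orthonormal hw (fun i k => μ i * μ k)]
  simp only [sq]
  ring

end Orthonormal

lemma PosSemidef.exists_orthonormal_eq_sum_smul_vecMulVec {ι : Type*} [Fintype ι]
    [DecidableEq ι] {B : Matrix ι ι ℝ} (hB : B.PosSemidef) :
    ∃ (μ : ι → ℝ) (w : ι → ι → ℝ), (∀ i k, w i ⬝ᵥ w k = if i = k then 1 else 0) ∧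
      (∀ k, 0 ≤ μ k) ∧ B.rank = #{k | μ k ≠ 0} ∧
      B = ∑ k, μ k • vecMulVec (w k) (w k) := by
  set U : Matrix ι ι ℝ := (hB.1.eigenvectorUnitary : Matrix ι ι ℝ)
  refine ⟨hB.1.eigenvalues, fun k a => U a k, fun i k => ?_, hB.eigenvalues_nonneg,
    by rw [hB.1.rank_eq_card_non_zero_eigs, Fintype.card_subtype], ?_⟩
  · have := congrFun (congrFun (Unitary.coe_star_mul_self hB.1.eigenvectorUnitary) i) k
    simpa [mul_apply, one_apply, dotProduct, U] using this
  · conv_lhs => rw [hB.1.spectral_theorem, Unitary.conjStarAlgAut_apply]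
    ext a b
    rw [mul_apply]
    simp only [mul_diagonal, sum_apply, smul_apply, vecMulVec_apply, star_apply, star_trivial,
      smul_eq_mul, Function.comp_apply, RCLike.ofReal_real_eq_id, id_eq, U]
    exact sum_congr rfl fun k _ => by ring

end Matrix

lemma sum_mul_le_sum_of_sum_le_card {ι : Type*} [Fintype ι] [DecidableEq ι] {c g : ι → ℝ}
    {s : Finset ι} {t : ℝ} (ht : 0 ≤ t) (hs : ∀ i ∈ s, t ≤ g i) (hsc : ∀ i ∉ s, g i ≤ t)
    (hc0 : ∀ i, 0 ≤ c i) (hc1 : ∀ i, c i ≤ 1) (hcs : ∑ i, c i ≤ #s) :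
    ∑ i, c i * g i ≤ ∑ i ∈ s, g i := by
  set e : ι → ℝ := fun i => c i - if i ∈ s then 1 else 0
  have he : ∀ i, e i * g i ≤ e i * t := fun i => by
    by_cases hi : i ∈ s
    · simp only [e, hi, if_true]; nlinarith [hs i hi, hc1 i]
    · simp only [e, hi, if_false, sub_zero]; exact mul_le_mul_of_nonneg_left (hsc i hi) (hc0 i)
  have hsplit : ∀ f : ι → ℝ, ∑ i, e i * f i = ∑ i, c i * f i - ∑ i ∈ s, f i := fun f => by
    simp only [e, sub_mul, ite_mul, one_mul, zero_mul, sum_sub_distrib, sum_ite_mem, univ_inter]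
  have := sum_le_sum fun i (_ : i ∈ univ) => he i
  rw [hsplit g, hsplit fun _ => t, ← sum_mul, sum_const, nsmul_eq_mul] at this
  nlinarith

lemma Antitone.sum_mul_le_sum_filter_lt {n j : ℕ} {c g : Fin n → ℝ} (hg : Antitone g)
    (hg0 : ∀ i, 0 ≤ g i) (hc0 : ∀ i, 0 ≤ c i) (hc1 : ∀ i, c i ≤ 1) (hcj : ∑ i, c i ≤ j) :
    ∑ i, c i * g i ≤ ∑ i ∈ univ.filter (fun i : Fin n => (i : ℕ) < j), g i := by
  obtain ⟨t, ht0, hlt, hge⟩ : ∃ t, 0 ≤ t ∧ (∀ i : Fin n, (i : ℕ) < j → t ≤ g i) ∧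
      ∀ i : Fin n, ¬ (i : ℕ) < j → g i ≤ t := by
    by_cases hj : j < n
    · exact ⟨g ⟨j, hj⟩, hg0 _, fun i hi => hg (Fin.le_def.mpr hi.le),
        fun i hi => hg (Fin.le_def.mpr (not_lt.mp hi))⟩
    · exact ⟨0, le_rfl, fun i _ => hg0 i, fun i hi => absurd (i.isLt.trans_le (not_lt.mp hj)) hi⟩
  refine sum_mul_le_sum_of_sum_le_card (s := univ.filter fun i : Fin n => (i : ℕ) < j) ht0
    (fun i hi => hlt i (by simpa using hi)) (fun i hi => hge i (by simpa using hi)) hc0 hc1 ?_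
  have hcn : ∑ i, c i ≤ n := by
    simpa using sum_le_sum fun i (_ : i ∈ univ) => hc1 i
  rw [Fin.card_filter_val_lt, Nat.cast_min]
  exact le_min hcn hcj

lemma max_sum_mul_zero_sq_le {ι : Type*} {s : Finset ι} {p ℓ : ι → ℝ}
    (hp0 : ∀ i ∈ s, 0 ≤ p i) (hp1 : ∑ i ∈ s, p i = 1) :
    max (∑ i ∈ s, p i * ℓ i) 0 ^ 2 ≤ ∑ i ∈ s, p i * max (ℓ i) 0 ^ 2 := by
  have hmax : max (∑ i ∈ s, p i * ℓ i) 0 ≤ ∑ i ∈ s, p i * max (ℓ i) 0 :=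
    max_le (sum_le_sum fun i hi => mul_le_mul_of_nonneg_left (le_max_left _ _) (hp0 i hi))
      (sum_nonneg fun i hi => mul_nonneg (hp0 i hi) (le_max_right _ _))
  calc max (∑ i ∈ s, p i * ℓ i) 0 ^ 2 ≤ (∑ i ∈ s, p i * max (ℓ i) 0) ^ 2 :=
        pow_le_pow_left₀ (le_max_right _ _) hmax 2
    _ ≤ ∑ i ∈ s, p i * max (ℓ i) 0 ^ 2 :=
        Real.pow_arith_mean_le_arith_mean_pow s _ _ hp0 hp1 (fun _ _ => le_max_right _ _) 2

lemma two_mul_sum_sub_sum_sq_le {n j : ℕ} {ℓ μ : Fin n → ℝ} {P : Fin n → Fin n → ℝ}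
    (hℓ : Antitone ℓ) (hP0 : ∀ i k, 0 ≤ P i k) (hProw : ∀ i, ∑ k, P i k = 1)
    (hPcol : ∀ k, ∑ i, P i k = 1) (hμ0 : ∀ k, 0 ≤ μ k) (hμj : #{k | μ k ≠ 0} ≤ j) :
    2 * ∑ i, ∑ k, ℓ i * μ k * P i k - ∑ k, μ k ^ 2
      ≤ ∑ i ∈ univ.filter (fun i : Fin n => (i : ℕ) < j), max (ℓ i) 0 ^ 2 := by
  set S : Finset (Fin n) := {k | μ k ≠ 0}
  set q : Fin n → ℝ := fun k => ∑ i, P i k * ℓ i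
  have hterm : ∀ k, 2 * (μ k * q k) - μ k ^ 2 ≤ max (q k) 0 ^ 2 := fun k => by
    rcases le_total (q k) 0 with h | h
    · rw [max_eq_right h]; nlinarith [hμ0 k]
    · rw [max_eq_left h]; nlinarith [sq_nonneg (μ k - q k)]
  have hg : Antitone fun i => max (ℓ i) 0 ^ 2 := fun i i' h =>
    pow_le_pow_left₀ (le_max_right _ _) (max_le_max_right 0 (hℓ h)) 2
  calc 2 * ∑ i, ∑ k, ℓ i * μ k * P i k - ∑ k, μ k ^ 2
      = ∑ k ∈ S, (2 * (μ k * q k) - μ k ^ 2) := by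
        rw [sum_filter_of_ne fun k _ hk => by contrapose! hk; simp [hk], sum_sub_distrib,
          ← mul_sum]
        congr 2
        rw [sum_comm]
        simp only [q, mul_sum]
        exact sum_congr rfl fun k _ => sum_congr rfl fun i _ => by ring
    _ ≤ ∑ k ∈ S, ∑ i, P i k * max (ℓ i) 0 ^ 2 :=
        sum_le_sum fun k _ => (hterm k).trans
          (max_sum_mul_zero_sq_le (fun i _ => hP0 i k) (hPcol k))
    _ = ∑ i, (∑ k ∈ S, P i k) * max (ℓ i) 0 ^ 2 := by
        rw [sum_comm]; simp only [sum_mul]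
    _ ≤ ∑ i ∈ univ.filter (fun i : Fin n => (i : ℕ) < j), max (ℓ i) 0 ^ 2 := by
        refine hg.sum_mul_le_sum_filter_lt (fun _ => sq_nonneg _)
          (fun i => sum_nonneg fun k _ => hP0 i k) (fun i => ?_) ?_
        · exact (sum_le_sum_of_subset_of_nonneg (subset_univ S) fun k _ _ => hP0 i k).trans
            (hProw i).le
        · rw [sum_comm, sum_congr rfl fun k _ => hPcol k, sum_const, nsmul_one]
          exact_mod_cast hμj

lemma sum_sum_sq_sub_truncation_le {n j : ℕ} {ℓ : Fin n → ℝ} {v : Fin n → Fin n → ℝ}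
    (hℓ : Antitone ℓ) (hv : ∀ i k, v i ⬝ᵥ v k = if i = k then 1 else 0)
    {B : Matrix (Fin n) (Fin n) ℝ} (hB : B.PosSemidef) (hrank : B.rank ≤ j) :
    ∑ a, ∑ b, ((∑ i, ℓ i • vecMulVec (v i) (v i)) a b
        - (∑ i ∈ univ.filter (fun i : Fin n => (i : ℕ) < j),
            max (ℓ i) 0 • vecMulVec (v i) (v i)) a b) ^ 2
      ≤ ∑ a, ∑ b, ((∑ i, ℓ i • vecMulVec (v i) (v i)) a b - B a b) ^ 2 := by
  obtain ⟨μ, w, hw, hμ0, hrankμ, rfl⟩ := hB.exists_orthonormal_eq_sum_smul_vecMulVec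
  set d : Fin n → ℝ := fun i => if (i : ℕ) < j then max (ℓ i) 0 else 0
  have hAhat : ∑ i ∈ univ.filter (fun i : Fin n => (i : ℕ) < j),
      max (ℓ i) 0 • vecMulVec (v i) (v i) = ∑ i, d i • vecMulVec (v i) (v i) := by
    simp only [sum_filter, d, ite_smul, zero_smul]
  have hd : ∀ i, ℓ i * d i = d i ^ 2 := fun i => by
    by_cases hi : (i : ℕ) < j
    · rcases le_total (ℓ i) 0 with h | h <;> simp [d, hi, h, sq]
    · simp [d, hi]
  have hdsq : ∑ i, d i ^ 2 = ∑ i ∈ univ.filter (fun i : Fin n => (i : ℕ) < j),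
      max (ℓ i) 0 ^ 2 := by
    simp only [sum_filter, d, ite_pow, zero_pow two_ne_zero]
  have hkey := two_mul_sum_sub_sum_sq_le (P := fun i k => (v i ⬝ᵥ w k) ^ 2) hℓ
    (fun _ _ => sq_nonneg _)
    (fun i => by
      simp_rw [dotProduct_comm (v i)]
      rw [sum_sq_dotProduct_of_orthonormal hw, hv, if_pos rfl])
    (fun k => by rw [sum_sq_dotProduct_of_orthonormal hv, hw, if_pos rfl])
    hμ0 (hrankμ ▸ hrank)
  rw [hAhat, sum_sum_sq_sub_sum_smul_vecMulVec hv hv, sum_sum_sq_sub_sum_smul_vecMulVec hv hw,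
    sum_sum_mul_sq_dotProduct_of_orthonormal hv (fun i k => ℓ i * d k)]
  simp only [hd, hdsq]
  linarith

lemma Real.log_add_one_le_log_add_div {σ s : ℝ} (hσ : 0 < σ) (hs : 0 < s) :
    Real.log σ + 1 ≤ Real.log s + σ / s := by
  have := Real.log_le_sub_one_of_pos (div_pos hσ hs)
  rw [Real.log_div hσ.ne' hs.ne'] at this
  linarith

theorem spiked_goe_joint_mle_general (n : ℕ)
    (X : Matrix (Fin n) (Fin n) ℝ) (ℓ : Fin n → ℝ) (v : Fin n → Fin n → ℝ)
    (hmono : ∀ i i' : Fin n, i ≤ i' → ℓ i' ≤ ℓ i)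
    (horth : ∀ i i' : Fin n, ∑ a, v i a * v i' a = if i = i' then 1 else 0)
    (hX : X = ∑ i, ℓ i • Matrix.vecMulVec (v i) (v i))
    (j : ℕ)
    (Ahat : Matrix (Fin n) (Fin n) ℝ)
    (hAhat : Ahat = ∑ i ∈ Finset.univ.filter (fun i : Fin n => (i : ℕ) < j),
      max (ℓ i) 0 • Matrix.vecMulVec (v i) (v i))
    (sighatsq : ℝ)
    (hsighatsq : sighatsq = (∑ a, ∑ b, (X a b - Ahat a b) ^ 2) / ((n : ℝ) + 1))
    (hpos : 0 < sighatsq)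
    (L : Matrix (Fin n) (Fin n) ℝ → ℝ → ℝ)
    (hL : ∀ (A : Matrix (Fin n) (Fin n) ℝ) (s : ℝ),
      L A s = -((n : ℝ) * ((n : ℝ) + 1) / 4) * Real.log s
        - ((n : ℝ) / (4 * s)) * ∑ a, ∑ b, (X a b - A a b) ^ 2)
    (B : Matrix (Fin n) (Fin n) ℝ) (hB : B.PosSemidef) (hrank : B.rank ≤ j)
    (s : ℝ) (hs : 0 < s) :
    L B s ≤ L Ahat sighatsq := by
  have hfit : ∑ a, ∑ b, (X a b - Ahat a b) ^ 2 ≤ ∑ a, ∑ b, (X a b - B a b) ^ 2 := by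
    subst hX hAhat
    exact sum_sum_sq_sub_truncation_le hmono horth hB hrank
  have hRA : ∑ a, ∑ b, (X a b - Ahat a b) ^ 2 = ((n : ℝ) + 1) * sighatsq := by
    rw [hsighatsq]; field_simp
  have hc : 0 ≤ (n : ℝ) * ((n : ℝ) + 1) / 4 := by positivity
  rw [hL, hL]
  calc -((n : ℝ) * ((n : ℝ) + 1) / 4) * Real.log s
        - (n : ℝ) / (4 * s) * ∑ a, ∑ b, (X a b - B a b) ^ 2
      ≤ -((n : ℝ) * ((n : ℝ) + 1) / 4) * Real.log s
        - (n : ℝ) / (4 * s) * ∑ a, ∑ b, (X a b - Ahat a b) ^ 2 := by gcongr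
    _ = -((n : ℝ) * ((n : ℝ) + 1) / 4) * (Real.log s + sighatsq / s) := by
        rw [hRA]; field_simp; ring
    _ ≤ -((n : ℝ) * ((n : ℝ) + 1) / 4) * (Real.log sighatsq + 1) :=
        mul_le_mul_of_nonpos_left (Real.log_add_one_le_log_add_div hpos hs) (by linarith)
    _ = -((n : ℝ) * ((n : ℝ) + 1) / 4) * Real.log sighatsq
        - (n : ℝ) / (4 * sighatsq) * ∑ a, ∑ b, (X a b - Ahat a b) ^ 2 := by
        rw [hRA]; field_simp; ring

/-- Joint maximum likelihood estimation for the spiked GOE model with unknown `σ²`.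
With `Â_j = Σ_{i ≤ j} max(ℓ_i, 0) v_i v_iᵀ`, `σ̂²_j = ‖X − Â_j‖_F²/(n+1) > 0` and
log-likelihood `L(A, s) = −(n(n+1)/4) log s − (n/(4s)) ‖X − A‖_F²`, one has
`L(B, s) ≤ L(Â_j, σ̂²_j)` for every positive semidefinite `B` of rank at most `j`
and every `s > 0`. -/
theorem spiked_goe_joint_mle (n : ℕ) (hn : 1 ≤ n)
    (X : Matrix (Fin n) (Fin n) ℝ) (ℓ : Fin n → ℝ) (v : Fin n → Fin n → ℝ)
    (hmono : ∀ i i' : Fin n, i ≤ i' → ℓ i' ≤ ℓ i)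
    (horth : ∀ i i' : Fin n, ∑ a, v i a * v i' a = if i = i' then 1 else 0)
    (hX : X = ∑ i, ℓ i • Matrix.vecMulVec (v i) (v i))
    (j : ℕ) (hj : j ≤ n)
    (Ahat : Matrix (Fin n) (Fin n) ℝ)
    (hAhat : Ahat = ∑ i ∈ Finset.univ.filter (fun i : Fin n => (i : ℕ) < j),
      max (ℓ i) 0 • Matrix.vecMulVec (v i) (v i))
    (sighatsq : ℝ)
    (hsighatsq : sighatsq = (∑ a, ∑ b, (X a b - Ahat a b) ^ 2) / ((n : ℝ) + 1))
    (hpos : 0 < sighatsq)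
    (L : Matrix (Fin n) (Fin n) ℝ → ℝ → ℝ)
    (hL : ∀ (A : Matrix (Fin n) (Fin n) ℝ) (s : ℝ),
      L A s = -((n : ℝ) * ((n : ℝ) + 1) / 4) * Real.log s
        - ((n : ℝ) / (4 * s)) * ∑ a, ∑ b, (X a b - A a b) ^ 2)
    (B : Matrix (Fin n) (Fin n) ℝ) (hB : B.PosSemidef) (hrank : B.rank ≤ j)
    (s : ℝ) (hs : 0 < s) :
    L B s ≤ L Ahat sighatsq :=
  spiked_goe_joint_mle_general n X ℓ v hmono horth hX j Ahat hAhat sighatsq hsighatsq hpos L hL B hB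
    hrank s hs
end
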